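/- arXiv:2205.08238 — 2 statements merged into one kernel-verified Lean document; each statement's English description precedes it below -/
import Mathlib

section
/- Let Ω be a directed set and {(X_α,B_α,b_α), f_{βα}} an inverse system of coarse proximity spaces over Ω with set-theoretic inverse limit Z and projections π_α. Equip Z with the bornology B = {B ⊆ Z : there exists α with π_α(B) ∈ B_α} and define, for A,C ⊆ Z, A b C if and only if π_α(A) b_α π_α(C) for every α ∈ Ω. If Z ≠ ∅, then (Z,B,b) is a coarse proximity space. -/
universe u v w

/-- A coarse proximity space: a set with a bornology and a coarse proximity relation. -/
structure CoarseProximity (X : Type u) where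
  bounded : Set (Set X)
  close : Set X → Set X → Prop
  empty_mem : ∅ ∈ bounded
  singleton_mem : ∀ x : X, {x} ∈ bounded
  subset_mem : ∀ A ∈ bounded, ∀ C : Set X, C ⊆ A → C ∈ bounded
  union_mem : ∀ A ∈ bounded, ∀ C ∈ bounded, A ∪ C ∈ bounded
  symm : ∀ A C : Set X, close A C → close C A
  unbounded_left : ∀ A C : Set X, close A C → A ∉ bounded
  unbounded_right : ∀ A C : Set X, close A C → C ∉ bounded
  inter_close : ∀ A C : Set X, A ∩ C ∉ bounded → close A C
  union_close_iff : ∀ A C D : Set X, (close (A ∪ C) D ↔ close A D ∨ close C D)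
  strong : ∀ A C : Set X, ¬ close A C → ∃ E : Set X, ¬ close A E ∧ ¬ close Eᶜ C

namespace CoarseProximity

variable {X : Type u}

/-- The weak asymptotic resemblance induced by a coarse proximity. -/
def phi (P : CoarseProximity X) (A C : Set X) : Prop :=
  (∀ C' : Set X, C' ⊆ C → C' ∉ P.bounded → P.close A C') ∧
  (∀ A' : Set X, A' ⊆ A → A' ∉ P.bounded → P.close A' C)

/-- `C ≪ A` : `A` is a coarse neighbourhood of `C`. -/
def ll (P : CoarseProximity X) (C A : Set X) : Prop :=
  ¬ P.close C Aᶜ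

/-- `A ⊑ C` : `A` is a coarse subset of `C`. -/
def subord (P : CoarseProximity X) (A C : Set X) : Prop :=
  ∀ D : Set X, P.close A D → P.close C D

/-- `A ≪_w C` : `C` is a weak coarse neighbourhood of `A`. -/
def llw (P : CoarseProximity X) (A C : Set X) : Prop :=
  ∃ D : Set X, P.ll A D ∧ P.subord D C

end CoarseProximity

/-- The star of a set `A` with respect to a collection `U`. -/
def starOf {X : Type u} (A : Set X) (U : Set (Set X)) : Set X :=
  ⋃₀ {B ∈ U | (B ∩ A).Nonempty}

/-- A uniformly bounded family in a coarse proximity space. -/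
def IsUnifBoundedFamily {X : Type u} (P : CoarseProximity X) (U : Set (Set X)) : Prop :=
  (∀ B ∈ U, B ∈ P.bounded) ∧
  ∀ A C : Set X, A ⊆ starOf C U → C ⊆ starOf A U → P.phi A C

/-- A uniformly bounded cover in a coarse proximity space. -/
def IsUnifBoundedCover {X : Type u} (P : CoarseProximity X) (U : Set (Set X)) : Prop :=
  IsUnifBoundedFamily P U ∧ ⋃₀ U = Set.univ

/-- `U` refines `V` : every member of `U` is contained in some member of `V`. -/
def CoverRefines {X : Type u} (U V : Set (Set X)) : Prop :=
  ∀ A ∈ U, ∃ B ∈ V, A ⊆ B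

/-- The order of a collection of sets is at most `n`. -/
def CoverOrderLE {X : Type u} (U : Set (Set X)) (n : ℕ) : Prop :=
  ∀ (x : X) (s : Finset (Set X)), (s : Set (Set X)) ⊆ U → (∀ B ∈ s, x ∈ B) → s.card ≤ n

/-- `asdim X ≤ n` : every uniformly bounded cover refines a uniformly bounded cover of
order at most `n+1`. -/
def AsdimLE {X : Type u} (P : CoarseProximity X) (n : ℕ) : Prop :=
  ∀ U : Set (Set X), IsUnifBoundedCover P U →
    ∃ V : Set (Set X), IsUnifBoundedCover P V ∧ CoverOrderLE V (n + 1) ∧ CoverRefines U V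

/-- A b-cover of a coarse proximity space. -/
def IsBCover {X : Type u} (P : CoarseProximity X) (F : Finset (Set X)) : Prop :=
  (∀ A ∈ F, ∀ B ∈ F, A ∈ P.bounded → B ∈ P.bounded → A = B) ∧
  (⋃ A ∈ F, A) = Set.univ ∧
  ∃ C : Set X → Set X, (⋃ A ∈ F, C A) = Set.univ ∧ ∀ A ∈ F, P.ll (C A) A

/-- A finite family is divergent if the family of complements is a b-cover. -/
def DivergentFam {X : Type u} (P : CoarseProximity X) (S : Finset (Set X)) : Prop :=
  haveI : DecidableEq (Set X) := Classical.decEq _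
  IsBCover P (S.image fun A => Aᶜ)

/-- A coarsely canonical cover of a coarse proximity space. -/
def IsCoarselyCanonicalCover {X : Type u} (P : CoarseProximity X) (F : Finset (Set X)) : Prop :=
  (∀ A ∈ F, ∀ B ∈ F, A ≠ B → A ∩ B = ∅) ∧
  (⋃ A ∈ F, A) = Set.univ ∧
  (∀ A ∈ F, ∀ B ∈ F, A ∈ P.bounded → B ∈ P.bounded → A = B) ∧
  (∀ A ∈ F, A ∉ P.bounded → ∃ K : Set X, K ∉ P.bounded ∧ P.llw K A) ∧
  (∀ A ∈ F, ∀ B ∈ F, A ≠ B → ¬ ∃ K : Set X, K ∉ P.bounded ∧ P.llw K A ∧ P.llw K B) ∧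
  (∀ K D : Set X, K ∉ P.bounded → P.ll K D →
    ∃ C : Set X, C ∉ P.bounded ∧ P.ll C D ∧ ∃ A ∈ F, P.llw C A)

/-- The order of a coarsely canonical cover is at most `m` : every `m+1` of its members
form a divergent family. -/
def CCCoverOrderLE {X : Type u} (P : CoarseProximity X) (F : Finset (Set X)) (m : ℕ) : Prop :=
  ∀ S : Finset (Set X), S ⊆ F → S.card = m + 1 → DivergentFam P S

/-- `V` coarsely refines `U`. -/
def CoarselyRefines {X : Type u} (P : CoarseProximity X) (V U : Finset (Set X)) : Prop :=
  ∀ A ∈ V, A ∉ P.bounded → ∃ B ∈ U, B ∉ P.bounded ∧ ∃ D ∈ P.bounded, A \ D ⊆ B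

/-- A fine directed system of coarsely canonical covers. -/
def IsFineDirectedSystem {X : Type u} (P : CoarseProximity X) {Ω : Type v} [Preorder Ω]
    (F : Ω → Finset (Set X)) : Prop :=
  Nonempty Ω ∧
  (∀ α β : Ω, ∃ γ : Ω, α ≤ γ ∧ β ≤ γ) ∧
  (∀ α, IsCoarselyCanonicalCover P (F α)) ∧
  (∀ α β : Ω, α ≤ β → CoarselyRefines P (F β) (F α)) ∧
  (∀ U : Finset (Set X), IsBCover P U → ∃ α, CoarselyRefines P (F α) U)

/-- A coarse proximity map between coarse proximity spaces. -/
def IsCoarseProxMap {X : Type u} {Y : Type v} (P : CoarseProximity X) (Q : CoarseProximity Y)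
    (f : X → Y) : Prop :=
  (∀ B ∈ P.bounded, f '' B ∈ Q.bounded) ∧
  ∀ A C : Set X, P.close A C → Q.close (f '' A) (f '' C)

/-- A family of subsets is a bornology: it contains the empty set and all singletons,
and is closed under subsets and finite unions. -/
def IsBornologyOn {X : Type u} (B : Set (Set X)) : Prop :=
  ∅ ∈ B ∧
  (∀ x : X, {x} ∈ B) ∧
  (∀ A ∈ B, ∀ C : Set X, C ⊆ A → C ∈ B) ∧
  (∀ A ∈ B, ∀ C ∈ B, A ∪ C ∈ B)

/-- The set-theoretic inverse limit (set of threads) of an inverse system. -/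
abbrev Thread {Ω : Type u} [Preorder Ω] (Xs : Ω → Type v)
    (f : ∀ α β : Ω, α ≤ β → Xs β → Xs α) : Type (max u v) :=
  {x : ∀ α, Xs α // ∀ (α β : Ω) (h : α ≤ β), f α β h (x β) = x α}

/-- Closeness is monotone in the second argument. -/
lemma CoarseProximity.close_mono_right {X : Type u} (P : CoarseProximity X)
    {A B B' : Set X} (h : B' ⊆ B) (hc : P.close A B') : P.close A B := by
  have h1 : P.close (B' ∪ B) A := (P.union_close_iff B' B A).mpr (Or.inl (P.symm _ _ hc))
  rw [Set.union_eq_right.mpr h] at h1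
  exact P.symm _ _ h1

/-- Closeness is monotone in the first argument. -/
lemma CoarseProximity.close_mono_left {X : Type u} (P : CoarseProximity X)
    {A A' B : Set X} (h : A' ⊆ A) (hc : P.close A' B) : P.close A B :=
  P.symm _ _ (P.close_mono_right h (P.symm _ _ hc))

/-- Coarse proximity maps send unbounded sets to unbounded sets. -/
lemma IsCoarseProxMap.unbounded_image {X : Type u} {Y : Type v}
    {P : CoarseProximity X} {Q : CoarseProximity Y} {g : X → Y}
    (h : IsCoarseProxMap P Q g) {A : Set X} (hA : A ∉ P.bounded) : g '' A ∉ Q.bounded := by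
  have hc : P.close A A := P.inter_close A A (by simpa [Set.inter_self] using hA)
  exact Q.unbounded_left _ _ (h.2 A A hc)

/-- If the set-theoretic inverse limit `Z` of an inverse system of coarse proximity spaces
is nonempty, then `Z` equipped with the limit bornology and the limit closeness relation
is a coarse proximity space. -/
theorem invlim_is_coarse_proximity {Ω : Type u} [Preorder Ω] [Nonempty Ω]
    (hdir : ∀ α β : Ω, ∃ γ : Ω, α ≤ γ ∧ β ≤ γ)
    (Xs : Ω → Type v) (Ps : ∀ α, CoarseProximity (Xs α))
    (f : ∀ α β : Ω, α ≤ β → Xs β → Xs α)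
    (hmap : ∀ (α β : Ω) (h : α ≤ β), IsCoarseProxMap (Ps β) (Ps α) (f α β h))
    (hcomp : ∀ (α β γ : Ω) (h1 : α ≤ β) (h2 : β ≤ γ) (x : Xs γ),
      f α β h1 (f β γ h2 x) = f α γ (le_trans h1 h2) x)
    (hne : Nonempty (Thread Xs f)) :
    ∃ Q : CoarseProximity (Thread Xs f),
      Q.bounded =
        {B : Set (Thread Xs f) |
          ∃ α : Ω, (fun z : Thread Xs f => z.val α) '' B ∈ (Ps α).bounded} ∧
      ∀ A C : Set (Thread Xs f),
        Q.close A C ↔ ∀ α : Ω,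
          (Ps α).close ((fun z : Thread Xs f => z.val α) '' A)
            ((fun z : Thread Xs f => z.val α) '' C) := by
  classical
  set proj : ∀ α : Ω, Set (Thread Xs f) → Set (Xs α) :=
    fun α A => (fun z : Thread Xs f => z.val α) '' A with hproj
  -- compatibility of projections with bonding maps
  have key : ∀ (α β : Ω) (h : α ≤ β) (A : Set (Thread Xs f)),
      proj α A = f α β h '' proj β A := by
    intro α β h A
    simp only [hproj, Set.image_image]
    exact Set.image_congr fun z _ => (z.2 α β h).symm
  -- boundedness transfers upward
  have up : ∀ (α β : Ω) (h : α ≤ β) (A : Set (Thread Xs f)),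
      proj α A ∈ (Ps α).bounded → proj β A ∈ (Ps β).bounded := by
    intro α β h A hb
    by_contra hun
    exact (hmap α β h).unbounded_image hun (by rw [← key α β h A] at *; exact hb)
  refine ⟨{ bounded := {B | ∃ α, proj α B ∈ (Ps α).bounded}
            close := fun A C => ∀ α, (Ps α).close (proj α A) (proj α C)
            empty_mem := ?_
            singleton_mem := ?_
            subset_mem := ?_
            union_mem := ?_
            symm := ?_
            unbounded_left := ?_
            unbounded_right := ?_
            inter_close := ?_
            union_close_iff := ?_
            strong := ?_ }, rfl, fun A C => Iff.rfl⟩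
  · obtain ⟨α⟩ := (inferInstance : Nonempty Ω)
    exact ⟨α, by simpa [hproj] using (Ps α).empty_mem⟩
  · intro z
    obtain ⟨α⟩ := (inferInstance : Nonempty Ω)
    exact ⟨α, by simpa [hproj] using (Ps α).singleton_mem (z.val α)⟩
  · rintro A ⟨α, hα⟩ C hCA
    exact ⟨α, (Ps α).subset_mem _ hα _ (Set.image_mono hCA)⟩
  · rintro A ⟨α, hα⟩ C ⟨β, hβ⟩
    obtain ⟨γ, hαγ, hβγ⟩ := hdir α β
    refine ⟨γ, ?_⟩
    have h1 := up α γ hαγ A hα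
    have h2 := up β γ hβγ C hβ
    simpa [hproj, Set.image_union] using (Ps γ).union_mem _ h1 _ h2
  · intro A C h α
    exact (Ps α).symm _ _ (h α)
  · rintro A C h ⟨α, hα⟩
    exact (Ps α).unbounded_left _ _ (h α) hα
  · rintro A C h ⟨α, hα⟩
    exact (Ps α).unbounded_right _ _ (h α) hα
  · intro A C h α
    have h1 : proj α (A ∩ C) ∉ (Ps α).bounded := fun hb => h ⟨α, hb⟩
    have h2 : proj α A ∩ proj α C ∉ (Ps α).bounded := fun hb =>
      h1 ((Ps α).subset_mem _ hb _
        (Set.image_inter_subset (fun z : Thread Xs f => z.val α) A C))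
    exact (Ps α).inter_close _ _ h2
  · intro A C D
    constructor
    · intro h
      by_contra hcon
      push_neg at hcon
      obtain ⟨hA, hC⟩ := hcon
      obtain ⟨α, hα⟩ := hA
      obtain ⟨β, hβ⟩ := hC
      obtain ⟨γ, hαγ, hβγ⟩ := hdir α β
      have hγ : (Ps γ).close (proj γ A ∪ proj γ C) (proj γ D) := by
        simpa [hproj, Set.image_union] using h γ
      rcases ((Ps γ).union_close_iff _ _ _).mp hγ with h' | h'
      · exact hα (by
          rw [key α γ hαγ A, key α γ hαγ D]
          exact (hmap α γ hαγ).2 _ _ h')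
      · exact hβ (by
          rw [key β γ hβγ C, key β γ hβγ D]
          exact (hmap β γ hβγ).2 _ _ h')
    · intro h α
      have : proj α (A ∪ C) = proj α A ∪ proj α C := by simp [hproj, Set.image_union]
      rw [this]
      rcases h with h | h
      · exact ((Ps α).union_close_iff _ _ _).mpr (Or.inl (h α))
      · exact ((Ps α).union_close_iff _ _ _).mpr (Or.inr (h α))
  · intro A C h
    obtain ⟨α, hα⟩ := not_forall.mp h
    obtain ⟨E0, hE1, hE2⟩ := (Ps α).strong _ _ hα
    refine ⟨{z : Thread Xs f | z.val α ∈ E0}, ?_, ?_⟩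
    · intro hcl
      exact hE1 ((Ps α).close_mono_right
        (by rintro _ ⟨z, hz, rfl⟩; exact hz) (hcl α))
    · intro hcl
      refine hE2 ((Ps α).close_mono_left ?_ (hcl α))
      rintro _ ⟨z, hz, rfl⟩
      exact hz
end

section
/- Let (X,B,b) be an infinite coarse proximity space whose bornology B is countably generated, and suppose there is a countable family C = {V_n}_{n∈ℕ} of uniformly bounded covers of X that witnesses the coarse proximity b. Then the family of uniformly bounded covers of X is countably generated: there is a countable family of uniformly bounded covers of X such that every uniformly bounded cover of X refines one of them. -/
universe u v w

/-- The bornology of a coarse proximity space is countably generated. -/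
def CountablyGeneratedBornology {X : Type u} (P : CoarseProximity X) : Prop :=
  ∃ B : ℕ → Set X, (∀ n, B n ∈ P.bounded) ∧ ∀ A ∈ P.bounded, ∃ n, A ⊆ B n

/-- A countable family of uniformly bounded covers witnesses the coarse proximity. -/
def WitnessedBy {X : Type u} (P : CoarseProximity X) (V : ℕ → Set (Set X)) : Prop :=
  ∀ A C : Set X, P.close A C → ∃ n, starOf A (V n) ∩ C ∉ P.bounded


section Aux

variable {X : Type u}

theorem cp_close_mono (P : CoarseProximity X) {A C A' C' : Set X} (h : P.close A C)
    (hA : A ⊆ A') (hC : C ⊆ C') : P.close A' C' := by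
  have h1 : P.close A' C := by
    have h0 := (P.union_close_iff A A' C).mpr (Or.inl h)
    rwa [Set.union_eq_self_of_subset_left hA] at h0
  have h2 := P.symm _ _ h1
  have h3 := (P.union_close_iff C C' A').mpr (Or.inl h2)
  rw [Set.union_eq_self_of_subset_left hC] at h3
  exact P.symm _ _ h3

theorem cp_phi_symm (P : CoarseProximity X) {A C : Set X} (h : P.phi A C) : P.phi C A :=
  ⟨fun A' hsub hunb => P.symm _ _ (h.2 A' hsub hunb),
   fun C' hsub hunb => P.symm _ _ (h.1 C' hsub hunb)⟩

theorem cp_phi_trans_aux (P : CoarseProximity X) {A B C : Set X}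
    (hAB : P.phi A B) (hBC : P.phi B C) :
    ∀ C' : Set X, C' ⊆ C → C' ∉ P.bounded → P.close A C' := by
  intro C' hsub hunb
  by_contra hncl
  obtain ⟨E, hE1, hE2⟩ := P.strong A C' hncl
  have hBC' : P.close B C' := hBC.1 C' hsub hunb
  have hsplit : P.close ((B ∩ E) ∪ (B ∩ Eᶜ)) C' := by rwa [Set.inter_union_compl]
  rcases (P.union_close_iff _ _ _).mp hsplit with h | h
  · have hunb2 : B ∩ E ∉ P.bounded := P.unbounded_left _ _ h
    have h4 := hAB.1 (B ∩ E) Set.inter_subset_left hunb2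
    exact hE1 (cp_close_mono P h4 (subset_refl A) Set.inter_subset_right)
  · exact hE2 (cp_close_mono P h Set.inter_subset_right (subset_refl C'))

theorem cp_phi_trans (P : CoarseProximity X) {A B C : Set X}
    (hAB : P.phi A B) (hBC : P.phi B C) : P.phi A C :=
  ⟨cp_phi_trans_aux P hAB hBC,
   fun A' hsub hunb =>
     P.symm _ _ (cp_phi_trans_aux P (cp_phi_symm P hBC) (cp_phi_symm P hAB) A' hsub hunb)⟩

theorem mem_starOf {A : Set X} {U : Set (Set X)} {z : X} :
    z ∈ starOf A U ↔ ∃ D, D ∈ U ∧ z ∈ D ∧ (D ∩ A).Nonempty := by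
  constructor
  · rintro ⟨D, ⟨hDU, hDA⟩, hzD⟩; exact ⟨D, hDU, hzD, hDA⟩
  · rintro ⟨D, hDU, hzD, hDA⟩; exact ⟨D, ⟨hDU, hDA⟩, hzD⟩

theorem subset_starOf {A D : Set X} {U : Set (Set X)} (hD : D ∈ U)
    (hne : (D ∩ A).Nonempty) : D ⊆ starOf A U :=
  fun _ hz => mem_starOf.mpr ⟨D, hD, hz, hne⟩

theorem starOf_mono {A A' : Set X} {U : Set (Set X)} (h : A ⊆ A') :
    starOf A U ⊆ starOf A' U := by
  intro z hz
  obtain ⟨D, hDU, hzD, p, hpD, hpA⟩ := mem_starOf.mp hz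
  exact mem_starOf.mpr ⟨D, hDU, hzD, p, hpD, h hpA⟩

theorem cp_phi_star (P : CoarseProximity X) {U : Set (Set X)}
    (hU : IsUnifBoundedCover P U) (S : Set X) : P.phi (starOf S U) S := by
  apply hU.1.2
  · exact subset_refl _
  · intro s hs
    have hs' : s ∈ ⋃₀ U := hU.2 ▸ Set.mem_univ s
    obtain ⟨D, hD, hsD⟩ := hs'
    have hsStar : s ∈ starOf S U := mem_starOf.mpr ⟨D, hD, hsD, ⟨s, hsD, hs⟩⟩
    exact mem_starOf.mpr ⟨D, hD, hsD, ⟨s, hsD, hsStar⟩⟩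

theorem cp_star_bounded (P : CoarseProximity X) {U : Set (Set X)}
    (hU : IsUnifBoundedCover P U) {K : Set X} (hK : K ∈ P.bounded) :
    starOf K U ∈ P.bounded := by
  by_contra h
  have hphi := cp_phi_star P hU K
  have hcl := hphi.2 (starOf K U) (subset_refl _) h
  exact (P.unbounded_right _ _ hcl) hK

theorem cp_bounded_of_finite (P : CoarseProximity X) {S : Set X} (h : S.Finite) :
    S ∈ P.bounded :=
  Set.Finite.induction_on (motive := fun s _ => s ∈ P.bounded) S h P.empty_mem fun {a s} _ _ ih => by
    rw [Set.insert_eq]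
    exact P.union_mem _ (P.singleton_mem a) _ ih

theorem cp_bounded_biUnion (P : CoarseProximity X) {ι : Type w} (s : Finset ι)
    (f : ι → Set X) (h : ∀ i ∈ s, f i ∈ P.bounded) : (⋃ i ∈ s, f i) ∈ P.bounded := by
  classical
  induction s using Finset.induction_on with
  | empty => simpa using P.empty_mem
  | insert _ _ ha ih =>
    rw [Finset.set_biUnion_insert]
    exact P.union_mem _ (h _ (Finset.mem_insert_self _ _)) _
      (ih fun i hi => h i (Finset.mem_insert_of_mem hi))

/-- `Tame P T p`: every unbounded subset of `p` is close to `T`. -/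
def CpTame (P : CoarseProximity X) (T p : Set X) : Prop :=
  ∀ S : Set X, S ⊆ p → S ∉ P.bounded → P.close S T

theorem cpTame_of_bounded (P : CoarseProximity X) {T p : Set X} (hp : p ∈ P.bounded) :
    CpTame P T p :=
  fun S hS hunb => absurd (P.subset_mem p hp S hS) hunb

theorem cpTame_of_phi (P : CoarseProximity X) {T p : Set X} (hphi : P.phi p T) :
    CpTame P T p :=
  fun S hS hunb => hphi.2 S hS hunb

theorem cpTame_union (P : CoarseProximity X) {T p q : Set X}
    (hp : CpTame P T p) (hq : CpTame P T q) : CpTame P T (p ∪ q) := by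
  intro S hS hunb
  by_cases h1 : S ∩ p ∈ P.bounded
  · have h2 : S ∩ q ∉ P.bounded := by
      intro h2
      apply hunb
      refine P.subset_mem _ (P.union_mem _ h1 _ h2) S ?_
      intro x hx
      rcases hS hx with h | h
      · exact Or.inl ⟨hx, h⟩
      · exact Or.inr ⟨hx, h⟩
    exact cp_close_mono P (hq (S ∩ q) Set.inter_subset_right h2)
      Set.inter_subset_left (subset_refl T)
  · exact cp_close_mono P (hp (S ∩ p) Set.inter_subset_right h1)
      Set.inter_subset_left (subset_refl T)

theorem cpTame_biUnion (P : CoarseProximity X) {ι : Type w} {T : Set X} (s : Finset ι)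
    (f : ι → Set X) (h : ∀ i ∈ s, CpTame P T (f i)) : CpTame P T (⋃ i ∈ s, f i) := by
  classical
  induction s using Finset.induction_on with
  | empty => simpa using cpTame_of_bounded P P.empty_mem
  | insert _ _ ha ih =>
    rw [Finset.set_biUnion_insert]
    exact cpTame_union P (h _ (Finset.mem_insert_self _ _))
      (ih fun i hi => h i (Finset.mem_insert_of_mem hi))

theorem cpTame_mono (P : CoarseProximity X) {T p q : Set X} (h : CpTame P T p)
    (hq : q ⊆ p) : CpTame P T q :=
  fun S hS hunb => h S (hS.trans hq) hunb

/-- The basic "ball of radius n around x" built from the witnessing covers. -/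
def Ecover (V : ℕ → Set (Set X)) (n : ℕ) (x : X) : Set X :=
  ⋃ i ∈ Finset.range (n + 1), starOf {x} (V i)

/-- The candidate countable family of uniformly bounded covers. -/
def Wcover (V : ℕ → Set (Set X)) (B : ℕ → Set X) (n m : ℕ) : Set (Set X) :=
  insert (B m) (Set.range (Ecover V n))

theorem Ecover_bounded (P : CoarseProximity X) {V : ℕ → Set (Set X)}
    (hV : ∀ i, IsUnifBoundedCover P (V i)) (n : ℕ) (x : X) :
    Ecover V n x ∈ P.bounded :=
  cp_bounded_biUnion P _ _ fun i _ => cp_star_bounded P (hV i) (P.singleton_mem x)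

theorem mem_Ecover_self (P : CoarseProximity X) {V : ℕ → Set (Set X)}
    (hV : ∀ i, IsUnifBoundedCover P (V i)) (n : ℕ) (x : X) : x ∈ Ecover V n x := by
  have hx : x ∈ ⋃₀ V 0 := (hV 0).2 ▸ Set.mem_univ x
  obtain ⟨D, hD, hxD⟩ := hx
  exact Set.mem_iUnion₂.mpr ⟨0, Finset.mem_range.mpr (Nat.succ_pos n),
    mem_starOf.mpr ⟨D, hD, hxD, ⟨x, hxD, rfl⟩⟩⟩

theorem starOf_Wcover_subset (V : ℕ → Set (Set X)) (B : ℕ → Set X) (n m : ℕ)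
    (T : Set X) :
    starOf T (Wcover V B n m) ⊆
      B m ∪ ⋃ i ∈ Finset.range (n + 1), ⋃ j ∈ Finset.range (n + 1),
        starOf (starOf T (V i)) (V j) := by
  intro z hz
  obtain ⟨M, hMW, hzM, p, hpM, hpT⟩ := mem_starOf.mp hz
  rcases hMW with rfl | ⟨x, rfl⟩
  · exact Or.inl hzM
  · -- M = Ecover V n x
    obtain ⟨i, hi, hpStar⟩ := Set.mem_iUnion₂.mp hpM
    obtain ⟨D, hDV, hpD, q, hqD, hqx⟩ := mem_starOf.mp hpStar
    have hxD : x ∈ D := by rwa [Set.mem_singleton_iff.mp hqx] at hqD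
    have hxStar : x ∈ starOf T (V i) := mem_starOf.mpr ⟨D, hDV, hxD, ⟨p, hpD, hpT⟩⟩
    obtain ⟨j, hj, hzStar⟩ := Set.mem_iUnion₂.mp hzM
    refine Or.inr (Set.mem_iUnion₂.mpr ⟨i, hi, Set.mem_iUnion₂.mpr ⟨j, hj, ?_⟩⟩)
    exact starOf_mono (Set.singleton_subset_iff.mpr hxStar) hzStar

theorem cpTame_starOf_Wcover (P : CoarseProximity X) {V : ℕ → Set (Set X)}
    {B : ℕ → Set X} (hV : ∀ i, IsUnifBoundedCover P (V i)) (hB : B m' ∈ P.bounded)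
    (n : ℕ) (T : Set X) : CpTame P T (starOf T (Wcover V B n m')) := by
  refine cpTame_mono P ?_ (starOf_Wcover_subset V B n m' T)
  refine cpTame_union P (cpTame_of_bounded P hB) ?_
  refine cpTame_biUnion P _ _ fun i _ => cpTame_biUnion P _ _ fun j _ => ?_
  exact cpTame_of_phi P
    (cp_phi_trans P (cp_phi_star P (hV j) (starOf T (V i))) (cp_phi_star P (hV i) T))

theorem Wcover_ubc (P : CoarseProximity X) {V : ℕ → Set (Set X)} {B : ℕ → Set X}
    (hV : ∀ i, IsUnifBoundedCover P (V i)) (n m : ℕ) (hB : B m ∈ P.bounded) :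
    IsUnifBoundedCover P (Wcover V B n m) := by
  refine ⟨⟨?_, ?_⟩, ?_⟩
  · rintro M (rfl | ⟨x, rfl⟩)
    · exact hB
    · exact Ecover_bounded P hV n x
  · intro A C hA hC
    constructor
    · intro C' hC' hC'unb
      exact P.symm _ _ ((cpTame_starOf_Wcover P hV hB n A) C'
        (hC'.trans (hC.trans (subset_refl _))) hC'unb)
    · intro A' hA' hA'unb
      exact (cpTame_starOf_Wcover P hV hB n C) A' (hA'.trans hA) hA'unb
  · ext z
    simp only [Set.mem_sUnion, Set.mem_univ, iff_true]
    exact ⟨Ecover V n z, Set.mem_insert_of_mem _ ⟨z, rfl⟩, mem_Ecover_self P hV n z⟩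

end Aux

/-- If `X` is an infinite coarse proximity space whose bornology is countably generated
and whose coarse proximity is witnessed by a countable family of uniformly bounded
covers, then the uniformly bounded covers of `X` are countably generated. -/
theorem unifBoundedCovers_countably_generated {X : Type u} [Infinite X]
    (P : CoarseProximity X)
    (hcg : CountablyGeneratedBornology P)
    (V : ℕ → Set (Set X))
    (hV : ∀ n, IsUnifBoundedCover P (V n))
    (hw : WitnessedBy P V) :
    ∃ W : ℕ → Set (Set X), (∀ n, IsUnifBoundedCover P (W n)) ∧
      ∀ U : Set (Set X), IsUnifBoundedCover P U → ∃ n, CoverRefines U (W n) := by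
  classical
  obtain ⟨B, hB1, hB2⟩ := hcg
  refine ⟨fun k => Wcover V B k.unpair.1 k.unpair.2,
    fun k => Wcover_ubc P hV _ _ (hB1 _), ?_⟩
  intro U hU
  -- Step 1: the tameness claim
  have claim : ∃ n : ℕ, ∃ K : Set X, K ∈ P.bounded ∧
      ∀ A ∈ U, ∀ x ∈ A, ∀ y ∈ A, x ∉ K → y ∉ K → y ∈ Ecover V n x := by
    by_contra hcon
    push_neg at hcon
    -- hcon : ∀ n K, K ∈ P.bounded → ∃ A ∈ U, ∃ x ∈ A, ∃ y ∈ A, x ∉ K ∧ y ∉ K ∧ y ∉ Ecover V n x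
    obtain ⟨x0⟩ : Nonempty X := inferInstance
    set Kf : (ℕ → X × X) → ℕ → Set X := fun f t =>
      B t ∪ ⋃ j ∈ Finset.range t, ⋃ i ∈ Finset.range (t + 1),
        (starOf {(f j).1} (V i) ∪ starOf {(f j).2} (V i)) with hKf
    have hKfb : ∀ f t, Kf f t ∈ P.bounded := by
      intro f t
      refine P.union_mem _ (hB1 t) _ ?_
      refine cp_bounded_biUnion P _ _ fun j _ => cp_bounded_biUnion P _ _ fun i _ => ?_
      exact P.union_mem _ (cp_star_bounded P (hV i) (P.singleton_mem _)) _
        (cp_star_bounded P (hV i) (P.singleton_mem _))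
    have hpick : ∀ (t : ℕ) (f : ℕ → X × X), ∃ p : X × X, ∃ A ∈ U,
        p.1 ∈ A ∧ p.2 ∈ A ∧ p.1 ∉ Kf f t ∧ p.2 ∉ Kf f t ∧ p.2 ∉ Ecover V t p.1 := by
      intro t f
      obtain ⟨A, hA, x, hx, y, hy, h1, h2, h3⟩ := hcon t (Kf f t) (hKfb f t)
      exact ⟨(x, y), A, hA, hx, hy, h1, h2, h3⟩
    choose pick hpickspec using hpick
    obtain ⟨hist, histS⟩ : ∃ h : ℕ → ℕ → X × X,
        ∀ t, h (t + 1) = Function.update (h t) t (pick t (h t)) :=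
      ⟨fun t => Nat.rec (fun _ => (x0, x0))
        (fun t ih => Function.update ih t (pick t ih)) t, fun _ => rfl⟩
    set seq : ℕ → X × X := fun t => hist (t + 1) t with hseq
    have agree : ∀ t j, j < t → hist t j = seq j := by
      intro t
      induction t with
      | zero => intro j hj; omega
      | succ t ih =>
        intro j hj
        rcases Nat.lt_succ_iff_lt_or_eq.mp hj with h | h
        · rw [histS t, Function.update_of_ne (by omega)]
          exact ih j h
        · subst h; rfl
    have hKcong : ∀ t, Kf (hist t) t = Kf seq t := by
      intro t
      simp only [hKf]
      congr 1
      refine Set.iUnion_congr fun j => Set.iUnion_congr fun hj => ?_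
      rw [agree t j (Finset.mem_range.mp hj)]
    have spec : ∀ t, ∃ A ∈ U, (seq t).1 ∈ A ∧ (seq t).2 ∈ A ∧
        (seq t).1 ∉ Kf seq t ∧ (seq t).2 ∉ Kf seq t ∧
        (seq t).2 ∉ Ecover V t (seq t).1 := by
      intro t
      have h := hpickspec t (hist t)
      rw [hKcong t] at h
      have he : seq t = pick t (hist t) := by
        simp [hseq, histS t]
      rw [he]
      exact h
    choose Amem hAmemU hx hy hxK hyK hyE using spec
    set Aset : Set X := Set.range fun t => (seq t).1 with hAset
    set Cset : Set X := Set.range fun t => (seq t).2 with hCset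
    have h1 : Aset ⊆ starOf Cset U := by
      rintro _ ⟨t, rfl⟩
      exact mem_starOf.mpr ⟨Amem t, hAmemU t, hx t, ⟨(seq t).2, hy t, ⟨t, rfl⟩⟩⟩
    have h2 : Cset ⊆ starOf Aset U := by
      rintro _ ⟨t, rfl⟩
      exact mem_starOf.mpr ⟨Amem t, hAmemU t, hy t, ⟨(seq t).1, hx t, ⟨t, rfl⟩⟩⟩
    have hphi := hU.1.2 Aset Cset h1 h2
    have hAunb : Aset ∉ P.bounded := by
      intro h
      obtain ⟨k, hk⟩ := hB2 Aset h
      exact hxK k (Set.mem_union_left _ (hk ⟨k, rfl⟩))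
    have hclose := hphi.2 Aset (subset_refl _) hAunb
    obtain ⟨i, hi⟩ := hw Aset Cset hclose
    apply hi
    have hsub : starOf Aset (V i) ∩ Cset ⊆ (fun t => (seq t).2) '' (Set.Iio i) := by
      rintro z ⟨hz1, t, rfl⟩
      obtain ⟨D, hD, hzD, p, hpD, s, hps⟩ := mem_starOf.mp hz1
      have hpD' : (seq s).1 ∈ D := by rw [show (seq s).1 = p from hps]; exact hpD
      refine ⟨t, ?_, rfl⟩
      simp only [Set.mem_Iio]
      by_contra hti
      push_neg at hti
      rcases lt_trichotomy s t with hst | hst | hst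
      · apply hyK t
        refine Set.mem_union_right _ ?_
        refine Set.mem_iUnion₂.mpr ⟨s, Finset.mem_range.mpr hst, ?_⟩
        refine Set.mem_iUnion₂.mpr ⟨i, Finset.mem_range.mpr (by omega), ?_⟩
        exact Or.inl (mem_starOf.mpr ⟨D, hD, hzD, ⟨(seq s).1, hpD', rfl⟩⟩)
      · subst hst
        apply hyE s
        refine Set.mem_iUnion₂.mpr ⟨i, Finset.mem_range.mpr (by omega), ?_⟩
        exact mem_starOf.mpr ⟨D, hD, hzD, ⟨(seq s).1, hpD', rfl⟩⟩
      · apply hxK s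
        refine Set.mem_union_right _ ?_
        refine Set.mem_iUnion₂.mpr ⟨t, Finset.mem_range.mpr hst, ?_⟩
        refine Set.mem_iUnion₂.mpr ⟨i, Finset.mem_range.mpr (by omega), ?_⟩
        exact Or.inr (mem_starOf.mpr ⟨D, hD, hpD', ⟨(seq t).2, hzD, rfl⟩⟩)
    exact P.subset_mem _ (cp_bounded_of_finite P ((Set.finite_Iio i).image _)) _ hsub
  -- Step 2: extract the refinement
  obtain ⟨n, K, hK, htame⟩ := claim
  obtain ⟨m, hm⟩ := hB2 (starOf K U) (cp_star_bounded P hU hK)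
  refine ⟨Nat.pair n m, ?_⟩
  intro A hA
  simp only [Nat.unpair_pair]
  by_cases hAK : (A ∩ K).Nonempty
  · exact ⟨B m, Set.mem_insert _ _,
      fun z hz => hm (subset_starOf hA hAK hz)⟩
  · rcases Set.eq_empty_or_nonempty A with hemp | ⟨x, hxA⟩
    · exact ⟨B m, Set.mem_insert _ _, by simp [hemp]⟩
    · refine ⟨Ecover V n x, Set.mem_insert_of_mem _ ⟨x, rfl⟩, ?_⟩
      intro y hyA
      have hxK' : x ∉ K := fun h => hAK ⟨x, hxA, h⟩
      have hyK' : y ∉ K := fun h => hAK ⟨y, hyA, h⟩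
      exact htame A hA x hxA y hyA hxK' hyK'
end
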